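/- Fix real numbers t and g. Let N : ℕ → ℕ with N(k) ≥ 3 for all k, and for each k let V^(k) : {1,…,N(k)} → ℝ be a potential, H_0^P(k) the corresponding linear Hamiltonian with periodic boundary conditions, and ψ^(k) ∈ ℂ^{N(k)} a normalized solution (∑_i |ψ^(k)_i|² = 1) of the stationary nonlinear Schrödinger equation with Dirichlet boundary conditions and eigenenergy E^(k) ∈ ℝ. If U_max^(k) := max_i |ψ^(k)_i|² → 0 as k → ∞, then dist(E^(k), σ(H_0^P(k))) → 0 as k → ∞. -/

import Mathlib

/-!
A Dirichlet solution `ψ` is an approximate eigenvector of the periodic Hamiltonian: the residual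
`H₀ᴾ ψ - E ψ` is the nonlinear term `-g |ψᵢ|² ψᵢ`, of ℓ²-norm at most `|g| U_max`, plus the two
wrap-around hoppings `t ψ_N` at site `1` and `t ψ_1` at site `N`, of total norm at most
`2 |t| √U_max`. For a Hermitian matrix `A` and a unit vector `x`, expanding `x` in an orthonormal
eigenbasis gives `dist(E, σ(A)) ≤ ‖A x - E x‖`.
-/

open Matrix Filter

noncomputable section

/-- Successor site with periodic boundary conditions (index mod `N`). -/
def pSucc {N : ℕ} (i : Fin N) : Fin N :=
  ⟨(i.1 + 1) % N, Nat.mod_lt _ (Nat.lt_of_le_of_lt (Nat.zero_le _) i.isLt)⟩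

/-- Predecessor site with periodic boundary conditions (index mod `N`). -/
def pPred {N : ℕ} (i : Fin N) : Fin N :=
  ⟨(i.1 + (N - 1)) % N, Nat.mod_lt _ (Nat.lt_of_le_of_lt (Nat.zero_le _) i.isLt)⟩

/-- The linear Hamiltonian `H_0^P` with periodic boundary conditions:
`(H ψ)_i = t (ψ_{i+1} + ψ_{i-1}) + V_i ψ_i`, indices mod `N`. -/
def periodicH (N : ℕ) (t : ℝ) (V : Fin N → ℝ) : Matrix (Fin N) (Fin N) ℂ :=
  Matrix.of fun i j =>
    (if j = pSucc i then (t : ℂ) else 0) + (if j = pPred i then (t : ℂ) else 0) +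
      (if j = i then (V i : ℂ) else 0)

/-- The linear Hamiltonian `H_0^D` with Dirichlet boundary conditions
(convention `ψ_0 = ψ_{N+1} = 0`). -/
def dirichletH (N : ℕ) (t : ℝ) (V : Fin N → ℝ) : Matrix (Fin N) (Fin N) ℂ :=
  Matrix.of fun i j =>
    (if i.1 + 1 = j.1 then (t : ℂ) else 0) + (if j.1 + 1 = i.1 then (t : ℂ) else 0) +
      (if j = i then (V i : ℂ) else 0)

/-- Sum of the neighboring values `ψ_{i+1} + ψ_{i-1}` with the Dirichlet
convention `ψ_0 = ψ_{N+1} = 0`. -/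
def dNbr {N : ℕ} (ψ : Fin N → ℂ) (i : Fin N) : ℂ :=
  (if h : i.1 + 1 < N then ψ ⟨i.1 + 1, h⟩ else 0) +
    (if 0 < i.1 then ψ ⟨i.1 - 1, Nat.lt_of_le_of_lt (Nat.sub_le _ _) i.isLt⟩ else 0)

/-- The stationary nonlinear Schrödinger equation with periodic boundary conditions:
`t (ψ_{i+1} + ψ_{i-1}) + V_i ψ_i + g |ψ_i|² ψ_i = E ψ_i`, indices mod `N`. -/
def PeriodicNLS (N : ℕ) (t g : ℝ) (V : Fin N → ℝ) (ψ : Fin N → ℂ) (E : ℝ) : Prop :=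
  ∀ i : Fin N,
    (t : ℂ) * (ψ (pSucc i) + ψ (pPred i)) + (V i : ℂ) * ψ i +
        (g : ℂ) * ((‖ψ i‖ : ℂ)) ^ 2 * ψ i = (E : ℂ) * ψ i

/-- The stationary nonlinear Schrödinger equation with Dirichlet boundary conditions:
`t (ψ_{i+1} + ψ_{i-1}) + V_i ψ_i + g |ψ_i|² ψ_i = E ψ_i`, with `ψ_0 = ψ_{N+1} = 0`. -/
def DirichletNLS (N : ℕ) (t g : ℝ) (V : Fin N → ℝ) (ψ : Fin N → ℂ) (E : ℝ) : Prop :=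
  ∀ i : Fin N,
    (t : ℂ) * dNbr ψ i + (V i : ℂ) * ψ i +
        (g : ℂ) * ((‖ψ i‖ : ℂ)) ^ 2 * ψ i = (E : ℂ) * ψ i

/-- Normalization `∑ i |ψ_i|² = 1`. -/
def Normalized {N : ℕ} (ψ : Fin N → ℂ) : Prop :=
  ∑ i, ‖ψ i‖ ^ 2 = 1

/-- `e` lists the eigenvalues of the Hermitian matrix `A` in nondecreasing order,
counted with multiplicity. -/
def IsSortedEigenvalues {N : ℕ} {A : Matrix (Fin N) (Fin N) ℂ} (hA : A.IsHermitian)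
    (e : Fin N → ℝ) : Prop :=
  Monotone e ∧ ∃ σ : Equiv.Perm (Fin N), ∀ i, e i = hA.eigenvalues (σ i)

namespace Matrix.IsHermitian

variable {𝕜 : Type*} [RCLike 𝕜] {n : Type*} [Fintype n] [DecidableEq n] {A : Matrix n n 𝕜}

lemma inner_eigenvectorBasis_toEuclideanLin (hA : A.IsHermitian) (x : EuclideanSpace 𝕜 n)
    (i : n) :
    inner 𝕜 (hA.eigenvectorBasis i) (toEuclideanLin A x) =
      hA.eigenvalues i * inner 𝕜 (hA.eigenvectorBasis i) x := by
  have heig : toEuclideanLin A (hA.eigenvectorBasis i) =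
      (hA.eigenvalues i : 𝕜) • hA.eigenvectorBasis i := by
    rw [toLpLin_apply, hA.mulVec_eigenvectorBasis, RCLike.real_smul_eq_coe_smul (K := 𝕜)]
    rfl
  rw [← (isSymmetric_toEuclideanLin_iff.mpr hA), heig, inner_smul_left, RCLike.conj_ofReal]

lemma infDist_eigenvalues_mul_norm_le (hA : A.IsHermitian) (x : EuclideanSpace 𝕜 n) (E : ℝ) :
    Metric.infDist E (Set.range hA.eigenvalues) * ‖x‖ ≤ ‖toEuclideanLin A x - (E : 𝕜) • x‖ := by
  set b := hA.eigenvectorBasis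
  set d := Metric.infDist E (Set.range hA.eigenvalues)
  have hd : ∀ i, d ≤ ‖(hA.eigenvalues i : 𝕜) - E‖ := fun i => by
    rw [← RCLike.ofReal_sub, RCLike.norm_ofReal, ← Real.dist_eq, dist_comm]
    exact Metric.infDist_le_dist_of_mem (Set.mem_range_self i)
  have hd0 : 0 ≤ d := Metric.infDist_nonneg
  refine (pow_le_pow_iff_left₀ (by positivity) (norm_nonneg _) two_ne_zero).1 ?_
  calc (d * ‖x‖) ^ 2 = ∑ i, d ^ 2 * ‖inner 𝕜 (b i) x‖ ^ 2 := by
        rw [← Finset.mul_sum, b.sum_sq_norm_inner_right, mul_pow]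
    _ ≤ ∑ i, ‖(hA.eigenvalues i : 𝕜) - E‖ ^ 2 * ‖inner 𝕜 (b i) x‖ ^ 2 := by
        gcongr with i
        exact hd i
    _ = ‖toEuclideanLin A x - (E : 𝕜) • x‖ ^ 2 := by
        rw [← b.sum_sq_norm_inner_right]
        congr! 1 with i
        rw [inner_sub_right, inner_smul_right, hA.inner_eigenvectorBasis_toEuclideanLin, ← sub_mul,
          norm_mul, mul_pow]

end Matrix.IsHermitian

lemma EuclideanSpace.norm_le_mul_norm_of_forall {𝕜 : Type*} [RCLike 𝕜] {ι : Type*} [Fintype ι]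
    {c : ℝ} (hc : 0 ≤ c) {x y : EuclideanSpace 𝕜 ι} (h : ∀ i, ‖x i‖ ≤ c * ‖y i‖) :
    ‖x‖ ≤ c * ‖y‖ := by
  refine (pow_le_pow_iff_left₀ (norm_nonneg _) (by positivity) two_ne_zero).1 ?_
  rw [mul_pow, EuclideanSpace.norm_sq_eq, EuclideanSpace.norm_sq_eq, Finset.mul_sum]
  gcongr with i
  rw [← mul_pow]
  exact pow_le_pow_left₀ (norm_nonneg _) (h i) 2

section Lattice

variable {n : ℕ}

lemma pSucc_of_lt {i : Fin n} (h : i.1 + 1 < n) : pSucc i = ⟨i.1 + 1, h⟩ :=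
  Fin.ext (Nat.mod_eq_of_lt h)

lemma pSucc_of_add_one_eq {i : Fin n} (h : i.1 + 1 = n) : pSucc i = ⟨0, i.pos⟩ :=
  Fin.ext <| by simp [pSucc, h]

lemma pPred_of_pos {i : Fin n} (h : 0 < i.1) : pPred i = ⟨i.1 - 1, by omega⟩ := by
  refine Fin.ext ?_
  change (i.1 + (n - 1)) % n = i.1 - 1
  rw [show i.1 + (n - 1) = i.1 - 1 + n by omega, Nat.add_mod_right, Nat.mod_eq_of_lt (by omega)]

lemma pPred_of_eq_zero {i : Fin n} (h : i.1 = 0) : pPred i = ⟨n - 1, by omega⟩ :=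
  Fin.ext <| by simp [pPred, h, Nat.mod_eq_of_lt (Nat.sub_lt i.pos one_pos)]

lemma pSucc_add_pPred_sub_dNbr (hn : 0 < n) (ψ : Fin n → ℂ) :
    (fun i => ψ (pSucc i) + ψ (pPred i) - dNbr ψ i) =
      Pi.single (⟨n - 1, by omega⟩ : Fin n) (ψ ⟨0, hn⟩) +
        Pi.single (⟨0, hn⟩ : Fin n) (ψ ⟨n - 1, by omega⟩) := by
  ext i
  have hsucc : ψ (pSucc i) - (if h : i.1 + 1 < n then ψ ⟨i.1 + 1, h⟩ else 0) =
      (Pi.single (⟨n - 1, by omega⟩ : Fin n) (ψ ⟨0, hn⟩) : Fin n → ℂ) i := by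
    rw [Pi.single_apply]
    by_cases h : i.1 + 1 < n
    · rw [dif_pos h, pSucc_of_lt h, sub_self, if_neg (Fin.ne_of_val_ne (by simp; omega))]
    · rw [dif_neg h, sub_zero, pSucc_of_add_one_eq (by omega), if_pos (Fin.ext (by simp; omega))]
  have hpred : ψ (pPred i) - (if 0 < i.1 then ψ ⟨i.1 - 1, by omega⟩ else 0) =
      (Pi.single (⟨0, hn⟩ : Fin n) (ψ ⟨n - 1, by omega⟩) : Fin n → ℂ) i := by
    rw [Pi.single_apply]
    by_cases h : 0 < i.1
    · rw [if_pos h, pPred_of_pos h, sub_self, if_neg (Fin.ne_of_val_ne (by simp; omega))]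
    · rw [if_neg h, sub_zero, pPred_of_eq_zero (by omega), if_pos (Fin.ext (by simp; omega))]
  rw [Pi.add_apply, ← hsucc, ← hpred, dNbr]
  ring

lemma periodicH_mulVec (t : ℝ) (V : Fin n → ℝ) (ψ : Fin n → ℂ) :
    periodicH n t V *ᵥ ψ = fun i => (t : ℂ) * (ψ (pSucc i) + ψ (pPred i)) + (V i : ℂ) * ψ i := by
  ext i
  simp [periodicH, Matrix.mulVec, dotProduct, add_mul, ite_mul, Finset.sum_add_distrib, mul_add]

end Lattice

section NLS

variable {n : ℕ} {t g E : ℝ} {V : Fin n → ℝ} {ψ : Fin n → ℂ}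

lemma Normalized.pos (h : Normalized ψ) : 0 < n := by
  rcases Nat.eq_zero_or_pos n with rfl | hn
  · simp [Normalized] at h
  · exact hn

lemma Normalized.norm_toLp (h : Normalized ψ) : ‖WithLp.toLp 2 ψ‖ = 1 := by
  rw [EuclideanSpace.norm_eq]
  exact (congrArg Real.sqrt h).trans Real.sqrt_one

lemma DirichletNLS.periodicH_mulVec_sub_smul (hn : 0 < n) (h : DirichletNLS n t g V ψ E) :
    periodicH n t V *ᵥ ψ - (E : ℂ) • ψ =
      (fun i => -((g : ℂ) * (‖ψ i‖ : ℂ) ^ 2 * ψ i)) +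
        (t : ℂ) • (Pi.single (⟨n - 1, by omega⟩ : Fin n) (ψ ⟨0, hn⟩) +
          Pi.single (⟨0, hn⟩ : Fin n) (ψ ⟨n - 1, by omega⟩)) := by
  rw [← pSucc_add_pPred_sub_dNbr hn, periodicH_mulVec]
  ext i
  simp only [Pi.sub_apply, Pi.add_apply, Pi.smul_apply, smul_eq_mul, ← h i]
  ring

theorem DirichletNLS.infDist_eigenvalues_periodicH_le (hH : (periodicH n t V).IsHermitian)
    (hnorm : Normalized ψ) (hsol : DirichletNLS n t g V ψ E) {U : ℝ}
    (hU : ∀ i, ‖ψ i‖ ^ 2 ≤ U) :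
    Metric.infDist E (Set.range hH.eigenvalues) ≤ |g| * U + 2 * |t| * √U := by
  have hn := hnorm.pos
  have hψ : ∀ i, ‖ψ i‖ ≤ √U := fun i => Real.le_sqrt_of_sq_le (hU i)
  have hU0 : 0 ≤ U := (sq_nonneg _).trans (hU ⟨0, hn⟩)
  have hnonlin : ‖WithLp.toLp 2 (fun i => -((g : ℂ) * (‖ψ i‖ : ℂ) ^ 2 * ψ i))‖ ≤ |g| * U := by
    calc _ ≤ |g| * U * ‖WithLp.toLp 2 ψ‖ := by
          refine EuclideanSpace.norm_le_mul_norm_of_forall (by positivity) fun i => ?_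
          simp only [norm_neg, norm_mul, norm_pow, Complex.norm_real, Real.norm_eq_abs, abs_norm]
          gcongr
          exact hU i
      _ = |g| * U := by rw [hnorm.norm_toLp, mul_one]
  calc Metric.infDist E (Set.range hH.eigenvalues)
      = Metric.infDist E (Set.range hH.eigenvalues) * ‖WithLp.toLp 2 ψ‖ := by
        rw [hnorm.norm_toLp, mul_one]
    _ ≤ ‖toEuclideanLin (periodicH n t V) (WithLp.toLp 2 ψ) - (E : ℂ) • WithLp.toLp 2 ψ‖ :=
        hH.infDist_eigenvalues_mul_norm_le _ _
    _ = ‖WithLp.toLp 2 (fun i => -((g : ℂ) * (‖ψ i‖ : ℂ) ^ 2 * ψ i)) +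
          (t : ℂ) • (EuclideanSpace.single (⟨n - 1, by omega⟩ : Fin n) (ψ ⟨0, hn⟩) +
            EuclideanSpace.single (⟨0, hn⟩ : Fin n) (ψ ⟨n - 1, by omega⟩))‖ := by
        rw [toLpLin_toLp, ← WithLp.toLp_smul, ← WithLp.toLp_sub, Matrix.toLin'_apply,
          hsol.periodicH_mulVec_sub_smul hn]
        rfl
    _ ≤ |g| * U + |t| * (√U + √U) := by
        grw [norm_add_le, norm_smul, norm_add_le, PiLp.norm_single, PiLp.norm_single, hnonlin,
          hψ, hψ, Complex.norm_real, Real.norm_eq_abs]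
    _ = |g| * U + 2 * |t| * √U := by ring

end NLS

theorem stmt_11_general (t g : ℝ) (N : ℕ → ℕ)
    (V : ∀ k, Fin (N k) → ℝ) (ψ : ∀ k, Fin (N k) → ℂ) (E : ℕ → ℝ)
    (hH : ∀ k, (periodicH (N k) t (V k)).IsHermitian)
    (hnorm : ∀ k, Normalized (ψ k))
    (hsol : ∀ k, DirichletNLS (N k) t g (V k) (ψ k) (E k))
    (hU : Tendsto (fun k => ⨆ i : Fin (N k), ‖ψ k i‖ ^ 2) atTop (nhds 0)) :
    Tendsto (fun k => Metric.infDist (E k) (Set.range (hH k).eigenvalues)) atTop (nhds 0) := by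
  have hle (k : ℕ) (i : Fin (N k)) : ‖ψ k i‖ ^ 2 ≤ ⨆ i : Fin (N k), ‖ψ k i‖ ^ 2 :=
    le_ciSup (f := fun i => ‖ψ k i‖ ^ 2) (Finite.bddAbove_range _) i
  have hbound := (hU.const_mul |g|).add (hU.sqrt.const_mul (2 * |t|))
  rw [Real.sqrt_zero, mul_zero, mul_zero, add_zero] at hbound
  exact squeeze_zero (fun k => Metric.infDist_nonneg)
    (fun k => (hsol k).infDist_eigenvalues_periodicH_le (hH k) (hnorm k) (hle k)) hbound

/-- Theorem 2 of the paper, Dirichlet boundary conditions: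
for a sequence of normalized Dirichlet solutions with `U_max^(k) → 0`
(critical or extended states), the distance of the eigenenergies to the spectrum
of the linear periodic Hamiltonian tends to zero. -/
theorem stmt_11 (t g : ℝ) (N : ℕ → ℕ) (hN : ∀ k, 3 ≤ N k)
    (V : ∀ k, Fin (N k) → ℝ) (ψ : ∀ k, Fin (N k) → ℂ) (E : ℕ → ℝ)
    (hH : ∀ k, (periodicH (N k) t (V k)).IsHermitian)
    (hnorm : ∀ k, Normalized (ψ k))
    (hsol : ∀ k, DirichletNLS (N k) t g (V k) (ψ k) (E k))
    (hU : Tendsto (fun k => ⨆ i : Fin (N k), ‖ψ k i‖ ^ 2) atTop (nhds 0)) :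
    Tendsto (fun k => Metric.infDist (E k) (Set.range (hH k).eigenvalues)) atTop (nhds 0) :=
  stmt_11_general t g N V ψ E hH hnorm hsol hU
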